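/- Let Y be a discrete random variable taking values in a finite type that is a disjoint union of two finite types S and N (so Y = Y_S on the event E_S that Y lands in S, and Y = Y_N on the complementary event E_N). If the indicator of the event E_S is measurable with respect to Z conditionally on X (i.e., the partition into S-values and N-values is determined by (X,Z)), then I(Y; Z | X) = P(E_S)·I(Y_S; Z | X, E_S) + P(E_N)·I(Y_N; Z | X, E_N) + I(1_{E_S}; Z | X), where Y_S, Y_N denote Y conditioned on the respective events. -/
import Mathlib


open scoped BigOperators Classical
open Real

noncomputable section

/-- A probability mass function on a finite sample space. -/
def IsPMF {Ω : Type*} [Fintype Ω] (P : Ω → ℝ) : Prop :=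
  (∀ ω, 0 ≤ P ω) ∧ ∑ ω, P ω = 1

/-- Probability that the random variable `f` takes the value `a`. -/
def pr {Ω : Type*} [Fintype Ω] (P : Ω → ℝ) {α : Type*} (f : Ω → α) (a : α) : ℝ :=
  ∑ ω, if f ω = a then P ω else 0

/-- Probability of an event `E`. -/
def prE {Ω : Type*} [Fintype Ω] (P : Ω → ℝ) (E : Ω → Prop) : ℝ :=
  ∑ ω, if E ω then P ω else 0

/-- Conditional measure given an event `E`. -/
def condP {Ω : Type*} [Fintype Ω] (P : Ω → ℝ) (E : Ω → Prop) : Ω → ℝ :=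
  fun ω => if E ω then P ω / prE P E else 0

/-- Shannon entropy of a finite-valued random variable. -/
def ent {Ω : Type*} [Fintype Ω] (P : Ω → ℝ) {α : Type*} [Fintype α] (f : Ω → α) : ℝ :=
  ∑ a, Real.negMulLog (pr P f a)

/-- Conditional entropy `H(f | g) = H(g, f) - H(g)`. -/
def condEnt {Ω : Type*} [Fintype Ω] (P : Ω → ℝ) {α β : Type*} [Fintype α] [Fintype β]
    (f : Ω → α) (g : Ω → β) : ℝ :=
  ent P (fun ω => (g ω, f ω)) - ent P g

/-- Mutual information `I(f; g) = H(f) + H(g) - H(f, g)`. -/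
def mi {Ω : Type*} [Fintype Ω] (P : Ω → ℝ) {α β : Type*} [Fintype α] [Fintype β]
    (f : Ω → α) (g : Ω → β) : ℝ :=
  ent P f + ent P g - ent P (fun ω => (f ω, g ω))

/-- Conditional mutual information `I(f; g | h) = H(f|h) + H(g|h) - H(f,g|h)`. -/
def cmi {Ω : Type*} [Fintype Ω] (P : Ω → ℝ) {α β γ : Type*} [Fintype α] [Fintype β] [Fintype γ]
    (f : Ω → α) (g : Ω → β) (h : Ω → γ) : ℝ :=
  condEnt P f h + condEnt P g h - condEnt P (fun ω => (f ω, g ω)) h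

section auxLemmas
set_option linter.unusedSectionVars false
variable {Ω : Type*} [Fintype Ω] {α β : Type*} [Fintype α] [Fintype β]

lemma pr_eq_zero' {Q : Ω → ℝ} {f : Ω → α} {a : α} (h : ∀ ω, f ω = a → Q ω = 0) :
    pr Q f a = 0 := by
  unfold pr
  exact Finset.sum_eq_zero fun ω _ => by
    by_cases hh : f ω = a
    · simp [hh, h ω hh]
    · simp [hh]

lemma ent_comp_inj (Q : Ω → ℝ) (f : Ω → β) (g : β → α) (hg : Function.Injective g) :
    ent Q (fun ω => g (f ω)) = ent Q f := by
  unfold ent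
  rw [← Finset.sum_subset (Finset.subset_univ ((Finset.univ : Finset β).image g))]
  · rw [Finset.sum_image (fun b _ b' _ h => hg h)]
    refine Finset.sum_congr rfl fun b _ => ?_
    congr 1
    unfold pr
    exact Finset.sum_congr rfl fun ω _ => by
      by_cases h : f ω = b
      · simp [h]
      · simp [h, hg.ne h]
  · intro a _ ha
    simp only [Finset.mem_image, Finset.mem_univ, true_and, not_exists] at ha
    rw [pr_eq_zero' fun ω h => absurd h (ha (f ω))]
    simp

lemma ent_pair_right (Q : Ω → ℝ) (f : Ω → α) (f' : Ω → β) (g' : α → β)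
    (h : ∀ ω, Q ω ≠ 0 → f' ω = g' (f ω)) :
    ent Q (fun ω => (f ω, f' ω)) = ent Q f := by
  have key : ∀ a b, pr Q (fun ω => (f ω, f' ω)) (a, b)
      = if b = g' a then pr Q f a else 0 := by
    intro a b
    unfold pr
    by_cases hb : b = g' a
    · rw [if_pos hb]
      refine Finset.sum_congr rfl fun ω _ => ?_
      by_cases hQ : Q ω = 0
      · split <;> split <;> simp [hQ]
      · have h2 := h ω hQ
        by_cases hf : f ω = a
        · simp [Prod.ext_iff, hf, h2, hb]
        · simp [Prod.ext_iff, hf]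
    · rw [if_neg hb]
      refine Finset.sum_eq_zero fun ω _ => ?_
      by_cases hQ : Q ω = 0
      · split <;> simp [hQ]
      · have h2 := h ω hQ
        rw [if_neg]
        simp only [Prod.ext_iff, not_and]
        intro hf
        rw [h2, hf]
        exact fun hc => hb hc.symm
  unfold ent
  rw [Fintype.sum_prod_type]
  refine Finset.sum_congr rfl fun a _ => ?_
  rw [Finset.sum_congr rfl fun b _ => congrArg Real.negMulLog (key a b)]
  simp [apply_ite Real.negMulLog]

lemma ent_congr (Q : Ω → ℝ) (f : Ω → α) (f' : Ω → β) (g' : α → β) (g : β → α)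
    (h1 : ∀ ω, Q ω ≠ 0 → f' ω = g' (f ω)) (h2 : ∀ ω, Q ω ≠ 0 → f ω = g (f' ω)) :
    ent Q f = ent Q f' := by
  have e1 : ent Q (fun ω => (f ω, f' ω)) = ent Q f := ent_pair_right Q f f' g' h1
  have e2 : ent Q (fun ω => (f' ω, f ω)) = ent Q f' := ent_pair_right Q f' f g h2
  have e3 : ent Q (fun ω => (f' ω, f ω)) = ent Q (fun ω => (f ω, f' ω)) :=
    ent_comp_inj Q (fun ω => (f ω, f' ω)) (fun p => (p.2, p.1))
      (fun p q h => by cases p; cases q; simpa [Prod.ext_iff, and_comm] using h)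
  rw [← e1, ← e3, e2]

lemma ent_fst_pair (Q : Ω → ℝ) (f : Ω → α) (g : α → β)
    (B : Ω → β) (h : ∀ ω, B ω = g (f ω)) :
    ent Q (fun ω => (B ω, f ω)) = ent Q f := by
  have he : (fun ω => (B ω, f ω)) = fun ω => ((fun a => (g a, a)) (f ω)) := by
    funext ω; rw [h ω]
  rw [he]
  exact ent_comp_inj Q f (fun a => (g a, a)) (fun a b hab => (Prod.ext_iff.1 hab).2)

lemma prE_eq_pr (P : Ω → ℝ) (B : Ω → Bool) (b : Bool) :
    prE P (fun ω => B ω = b) = pr P B b := rfl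

lemma pr_bool (P : Ω → ℝ) (B : Ω → Bool) (b : Bool) :
    pr P B b = ∑ ω, if B ω = b then P ω else 0 := by
  unfold pr
  exact Finset.sum_congr rfl fun ω _ => by by_cases h : B ω = b <;> simp [h]

lemma zero_of_pr_zero {P : Ω → ℝ} (hP0 : ∀ ω, 0 ≤ P ω) {B : Ω → Bool} {b : Bool}
    (hp : pr P B b = 0) : ∀ ω, B ω = b → P ω = 0 := by
  intro ω hω
  rw [pr_bool] at hp
  have := (Finset.sum_eq_zero_iff_of_nonneg (fun ω _ => by
    by_cases h : B ω = b
    · simp [h]; exact hP0 ω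
    · simp [h])).1 hp ω (Finset.mem_univ ω)
  simpa [hω] using this

lemma pr_pair_cond (P : Ω → ℝ) (hP0 : ∀ ω, 0 ≤ P ω) (B : Ω → Bool) (f : Ω → α)
    (b : Bool) (a : α) :
    pr P (fun ω => (B ω, f ω)) (b, a)
      = pr P B b * pr (condP P (fun ω => B ω = b)) f a := by
  by_cases hp : pr P B b = 0
  · rw [hp, zero_mul]
    exact pr_eq_zero' fun ω h =>
      zero_of_pr_zero hP0 hp ω (Prod.ext_iff.1 h).1
  · unfold pr condP
    rw [Finset.mul_sum]
    refine Finset.sum_congr rfl fun ω _ => ?_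
    rw [prE_eq_pr]
    by_cases hb : B ω = b
    · by_cases ha : f ω = a
      · rw [if_pos (show (B ω, f ω) = (b, a) by rw [hb, ha]), if_pos ha, if_pos hb,
          mul_comm]
        exact (div_mul_cancel₀ (P ω) hp).symm
      · simp [Prod.ext_iff, ha]
    · simp [Prod.ext_iff, hb]

lemma sum_pr_cond (P : Ω → ℝ) (B : Ω → Bool) (f : Ω → α) (b : Bool)
    (hp : pr P B b ≠ 0) :
    ∑ a, pr (condP P (fun ω => B ω = b)) f a = 1 := by
  unfold pr
  rw [Finset.sum_comm]
  have h1 : ∀ ω, ∑ a, (if f ω = a then condP P (fun ω => B ω = b) ω else 0)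
      = condP P (fun ω => B ω = b) ω := fun ω => by
    rw [Finset.sum_ite_eq Finset.univ (f ω)]
    simp
  rw [Finset.sum_congr rfl fun ω _ => h1 ω]
  have h2 : ∀ ω, condP P (fun ω => B ω = b) ω
      = (if B ω = b then P ω else 0) / pr P B b := fun ω => by
    unfold condP
    rw [prE_eq_pr]
    by_cases h : B ω = b <;> simp [h]
  rw [Finset.sum_congr rfl fun ω _ => h2 ω, ← Finset.sum_div, ← pr_bool, div_self hp]

lemma ent_cond_sum (P : Ω → ℝ) (hP0 : ∀ ω, 0 ≤ P ω) (B : Ω → Bool) (f : Ω → α) :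
    ent P (fun ω => (B ω, f ω)) =
      ent P B + pr P B true * ent (condP P (fun ω => B ω = true)) f
              + pr P B false * ent (condP P (fun ω => B ω = false)) f := by
  have key : ∀ b, ∑ a, Real.negMulLog (pr P (fun ω => (B ω, f ω)) (b, a))
      = Real.negMulLog (pr P B b) + pr P B b * ent (condP P (fun ω => B ω = b)) f := by
    intro b
    rw [Finset.sum_congr rfl fun a _ =>
      congrArg Real.negMulLog (pr_pair_cond P hP0 B f b a)]
    by_cases hp : pr P B b = 0
    · simp [hp]
    · rw [Finset.sum_congr rfl fun a _ => Real.negMulLog_mul _ _]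
      rw [Finset.sum_add_distrib, ← Finset.sum_mul, ← Finset.mul_sum,
        sum_pr_cond P B f b hp]
      unfold ent
      ring
  have hpair : ent P (fun ω => (B ω, f ω))
      = ∑ b : Bool, ∑ a, Real.negMulLog (pr P (fun ω => (B ω, f ω)) (b, a)) := by
    unfold ent
    rw [Fintype.sum_prod_type]
  have hB : ent P B = Real.negMulLog (pr P B false) + Real.negMulLog (pr P B true) := by
    unfold ent
    rw [Fintype.sum_bool]
    ring
  rw [hpair, Fintype.sum_bool, key true, key false, hB]
  ring

end auxLemmas

theorem stmt_1 {Ω S N α γ : Type*} [Fintype Ω] [Fintype S] [Fintype N] [Fintype α] [Fintype γ]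
    (P : Ω → ℝ) (hP : IsPMF P)
    (Y : Ω → S ⊕ N) (X : Ω → α) (Z : Ω → γ)
    (ES : Ω → Prop) (EN : Ω → Prop)
    (hES : ∀ ω, ES ω ↔ (Y ω).isLeft = true)
    (hEN : ∀ ω, EN ω ↔ (Y ω).isRight = true)
    -- the indicator of `E_S` is determined by `(X, Z)`
    (hmeas : ∃ φ : α × γ → Bool, ∀ ω, (Y ω).isLeft = φ (X ω, Z ω)) :
    cmi P Y Z X =
      prE P ES * cmi (condP P ES) (fun ω => (Y ω).getLeft?) Z X
      + prE P EN * cmi (condP P EN) (fun ω => (Y ω).getRight?) Z X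
      + cmi P (fun ω => (Y ω).isLeft) Z X := by
  classical
  obtain ⟨φ, hφ⟩ := hmeas
  have hP0 := hP.1
  have hΩ : Nonempty Ω := by
    by_contra h
    rw [not_nonempty_iff] at h
    have h2 := hP.2
    rw [Finset.univ_eq_empty, Finset.sum_empty] at h2
    norm_num at h2
  have hSN : Nonempty (S ⊕ N) := ⟨Y (Classical.arbitrary Ω)⟩
  set B : Ω → Bool := fun ω => (Y ω).isLeft with hBdef
  set YS : Ω → Option S := fun ω => (Y ω).getLeft? with hYSdef
  set YN : Ω → Option N := fun ω => (Y ω).getRight? with hYNdef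
  have hES' : ES = fun ω => B ω = true := funext fun ω => propext (hES ω)
  have hEN' : EN = fun ω => B ω = false := funext fun ω => propext (by
    rw [hEN ω]
    show (Y ω).isRight = true ↔ B ω = false
    rw [show B ω = (Y ω).isLeft from rfl]
    cases hY : Y ω <;> simp [hY])
  rw [hES', hEN']
  set QS : Ω → ℝ := condP P (fun ω => B ω = true) with hQSdef
  set QN : Ω → ℝ := condP P (fun ω => B ω = false) with hQNdef
  set pS : ℝ := pr P B true with hpSdef
  set pN : ℝ := pr P B false with hpNdef
  have hprS : prE P (fun ω => B ω = true) = pS := rfl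
  have hprN : prE P (fun ω => B ω = false) = pN := rfl
  rw [hprS, hprN]
  -- support lemmas
  have hsuppS : ∀ ω, QS ω ≠ 0 → B ω = true := by
    intro ω h
    by_contra hb
    exact h (by simp [hQSdef, condP, hb])
  have hsuppN : ∀ ω, QN ω ≠ 0 → B ω = false := by
    intro ω h
    by_contra hb
    exact h (by simp [hQNdef, condP, hb])
  -- recovery functions
  let recS : Option S → S ⊕ N := fun o => o.elim (Classical.arbitrary _) Sum.inl
  let recN : Option N → S ⊕ N := fun o => o.elim (Classical.arbitrary _) Sum.inr
  have hrecS : ∀ ω, B ω = true → Y ω = recS (YS ω) := by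
    intro ω hb
    have hb' : (Y ω).isLeft = true := hb
    show Y ω = recS ((Y ω).getLeft?)
    cases h : Y ω with
    | inl s => simp [recS]
    | inr n => rw [h] at hb'; simp at hb' 
  have hrecN : ∀ ω, B ω = false → Y ω = recN (YN ω) := by
    intro ω hb
    have hb' : (Y ω).isLeft = false := hb
    show Y ω = recN ((Y ω).getRight?)
    cases h : Y ω with
    | inl s => rw [h] at hb'; simp at hb'
    | inr n => simp [recN]
  -- main entropy identities
  have eP1 : ent P (fun ω => (X ω, Y ω))
      = ent P B + pS * ent QS (fun ω => (X ω, Y ω)) + pN * ent QN (fun ω => (X ω, Y ω)) := by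
    rw [← ent_fst_pair P (fun ω => (X ω, Y ω)) (fun p => p.2.isLeft) B (fun ω => rfl)]
    exact ent_cond_sum P hP0 B _
  have eP2 : ent P (fun ω => (X ω, Z ω))
      = ent P B + pS * ent QS (fun ω => (X ω, Z ω)) + pN * ent QN (fun ω => (X ω, Z ω)) := by
    rw [← ent_fst_pair P (fun ω => (X ω, Z ω)) φ B (fun ω => hφ ω)]
    exact ent_cond_sum P hP0 B _
  have eP3 : ent P (fun ω => (X ω, (Y ω, Z ω)))
      = ent P B + pS * ent QS (fun ω => (X ω, (Y ω, Z ω)))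
        + pN * ent QN (fun ω => (X ω, (Y ω, Z ω))) := by
    rw [← ent_fst_pair P (fun ω => (X ω, (Y ω, Z ω))) (fun p => p.2.1.isLeft) B
      (fun ω => rfl)]
    exact ent_cond_sum P hP0 B _
  have eP4 : ent P (fun ω => (X ω, B ω))
      = ent P B + pS * ent QS X + pN * ent QN X := by
    have hswap : ent P (fun ω => (X ω, B ω)) = ent P (fun ω => (B ω, X ω)) :=
      ent_comp_inj P (fun ω => (B ω, X ω)) (fun p => (p.2, p.1))
        (fun p q h => by cases p; cases q; simpa [Prod.ext_iff, and_comm] using h)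
    rw [hswap]
    exact ent_cond_sum P hP0 B X
  have eP5 : ent P (fun ω => (X ω, (B ω, Z ω))) = ent P (fun ω => (X ω, Z ω)) := by
    have he : (fun ω => (X ω, (B ω, Z ω)))
        = fun ω => ((fun p : α × γ => (p.1, (φ p, p.2))) (X ω, Z ω)) := by
      funext ω
      simp only [hBdef]
      rw [hφ ω]
    rw [he]
    exact ent_comp_inj P (fun ω => (X ω, Z ω)) (fun p : α × γ => (p.1, (φ p, p.2)))
      (fun p q h => by
        obtain ⟨h1, h2, h3⟩ := by simpa [Prod.ext_iff] using h
        exact Prod.ext h1 h3)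
  have eS1 : ent QS (fun ω => (X ω, Y ω)) = ent QS (fun ω => (X ω, YS ω)) :=
    ent_congr QS _ _ (fun p => (p.1, p.2.getLeft?)) (fun p => (p.1, recS p.2))
      (fun ω _ => rfl)
      (fun ω h => by rw [hrecS ω (hsuppS ω h)])
  have eN1 : ent QN (fun ω => (X ω, Y ω)) = ent QN (fun ω => (X ω, YN ω)) :=
    ent_congr QN _ _ (fun p => (p.1, p.2.getRight?)) (fun p => (p.1, recN p.2))
      (fun ω _ => rfl)
      (fun ω h => by rw [hrecN ω (hsuppN ω h)])
  have eS2 : ent QS (fun ω => (X ω, (Y ω, Z ω))) = ent QS (fun ω => (X ω, (YS ω, Z ω))) :=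
    ent_congr QS _ _ (fun p => (p.1, (p.2.1.getLeft?, p.2.2)))
      (fun p => (p.1, (recS p.2.1, p.2.2)))
      (fun ω _ => rfl)
      (fun ω h => by rw [hrecS ω (hsuppS ω h)])
  have eN2 : ent QN (fun ω => (X ω, (Y ω, Z ω))) = ent QN (fun ω => (X ω, (YN ω, Z ω))) :=
    ent_congr QN _ _ (fun p => (p.1, (p.2.1.getRight?, p.2.2)))
      (fun p => (p.1, (recN p.2.1, p.2.2)))
      (fun ω _ => rfl)
      (fun ω h => by rw [hrecN ω (hsuppN ω h)])
  simp only [cmi, condEnt]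
  linear_combination eP1 + eP2 - eP3 - eP4 + eP5 + pS * eS1 - pS * eS2 + pN * eN1 - pN * eN2
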